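/- arXiv:2211.10203 — 2 statements merged into one kernel-verified Lean document; each statement's English description precedes it below -/
import Mathlib

section
/- Let p ≥ M ≥ 1, let U be a real p×M matrix with orthonormal columns (UᵀU = I_M), let Λ be an M×M diagonal matrix with nonnegative diagonal entries, let c > 0 and a ≥ 0, and let Σ̄ be a p×p real symmetric positive semidefinite matrix. With P = c·I_p + a·U Λ Uᵀ, one has |tr(P^{−1/2}·(c·Σ̄ + a·U Λ Uᵀ)·P^{−1/2}) − tr(Σ̄)| ≤ 2·M·‖Σ̄‖ + M. -/
/-!
By cyclicity, `tr (P^{-1/2} X P^{-1/2}) = tr (P⁻¹ X)`. Since `Uᵀ U = 1`, a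
Woodbury-type identity gives `P⁻¹ = c⁻¹ (1 - U G Uᵀ)` with `G = diag (a dᵢ / (c + a dᵢ))`, and then
`P⁻¹ (c Σ̄ + a U Λ Uᵀ) = Σ̄ + U G Uᵀ (1 - Σ̄)`. The trace error is therefore
`tr (G (1 - Uᵀ Σ̄ U))`: a sum of `M` diagonal terms with weights `0 ≤ Gᵢᵢ ≤ 1`, each bounded by
`‖1 - Uᵀ Σ̄ U‖ ≤ 1 + ‖Σ̄‖` because `U` is an isometry.
-/

open Matrix
open scoped Matrix.Norms.L2Operator

/-- The positive semidefinite square root of a real matrix (zero junk value when the matrix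
is not positive semidefinite). -/
noncomputable def matSqrt {n : Type*} [Fintype n] [DecidableEq n]
    (A : Matrix n n ℝ) : Matrix n n ℝ :=
  letI := Classical.propDecidable
  if h : A.PosSemidef then
    (h.1.eigenvectorUnitary : Matrix n n ℝ) *
      diagonal ((RCLike.ofReal : ℝ → ℝ) ∘ Real.sqrt ∘ h.1.eigenvalues) *
      (star h.1.eigenvectorUnitary : Matrix n n ℝ)
  else 0

/-- `A^{−1/2}`: the inverse of the positive semidefinite square root. -/
noncomputable def matInvSqrt {n : Type*} [Fintype n] [DecidableEq n]
    (A : Matrix n n ℝ) : Matrix n n ℝ :=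
  (matSqrt A)⁻¹

namespace Matrix

variable {m n : Type*} [Fintype m] [Fintype n]

section SquareRoot

variable [DecidableEq n]

theorem matSqrt_mul_self {A : Matrix n n ℝ} (hA : A.PosSemidef) :
    matSqrt A * matSqrt A = A := by
  simp only [matSqrt]
  rw [dif_pos hA]
  -- `matSqrt` diagonalises `A` under classical decidability; use the same instance here.
  let := Classical.propDecidable
  have conj_mul_conj : ∀ E s : Matrix n n ℝ, star E * E = 1 →
      E * s * star E * (E * s * star E) = E * (s * s) * star E := fun E s hE => by
    simp only [Matrix.mul_assoc, ← Matrix.mul_assoc (star E) E, hE, Matrix.one_mul]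
  rw [conj_mul_conj _ _ (Unitary.coe_star_mul_self _), diagonal_mul_diagonal]
  conv_rhs => rw [hA.1.spectral_theorem, Unitary.conjStarAlgAut_apply]
  congr 3
  funext i
  simp [Real.mul_self_sqrt (hA.eigenvalues_nonneg i)]

theorem trace_matInvSqrt_mul_mul_matInvSqrt {A : Matrix n n ℝ} (hA : A.PosSemidef)
    (X : Matrix n n ℝ) :
    (matInvSqrt A * X * matInvSqrt A).trace = (A⁻¹ * X).trace := by
  rw [trace_mul_cycle, matInvSqrt, ← mul_inv_rev, matSqrt_mul_self hA]

end SquareRoot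

section LowRank

variable {K : Type*} [Field K] [DecidableEq n]

theorem mul_diagonal_mul_transpose_mul_mul_diagonal_mul_transpose {U : Matrix m n K}
    (hU : Uᵀ * U = 1) (v w : n → K) :
    U * diagonal v * Uᵀ * (U * diagonal w * Uᵀ) = U * diagonal (v * w) * Uᵀ := by
  simp only [Matrix.mul_assoc]
  rw [← Matrix.mul_assoc Uᵀ U, hU, Matrix.one_mul, ← Matrix.mul_assoc (diagonal v),
    diagonal_mul_diagonal]
  rfl

variable {c : K} {e : n → K} (hce : ∀ i, c + e i ≠ 0)
include hce

omit [Fintype n] in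
theorem diagonal_sub_diagonal_mul_div_add :
    diagonal e - diagonal (e * fun i => e i / (c + e i)) =
      c • diagonal fun i => e i / (c + e i) := by
  rw [← diagonal_smul, diagonal_sub]
  congr 1
  funext i
  simp only [Pi.smul_apply, Pi.mul_apply, smul_eq_mul]
  field_simp [hce i]
  ring

omit [Fintype m] in
theorem mul_diagonal_mul_transpose_sub_mul_diagonal_mul_transpose (U : Matrix m n K) :
    U * diagonal e * Uᵀ - U * diagonal (e * fun i => e i / (c + e i)) * Uᵀ =
      c • (U * diagonal (fun i => e i / (c + e i)) * Uᵀ) := by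
  rw [← Matrix.sub_mul, ← Matrix.mul_sub, diagonal_sub_diagonal_mul_div_add hce, Matrix.mul_smul,
    Matrix.smul_mul]

variable [DecidableEq m] {U : Matrix m n K} (hU : Uᵀ * U = 1)
include hU

theorem smul_one_add_mul_diagonal_mul_transpose_mul_one_sub :
    (c • 1 + U * diagonal e * Uᵀ) * (1 - U * diagonal (fun i => e i / (c + e i)) * Uᵀ) =
      c • 1 := by
  rw [Matrix.add_mul, Matrix.mul_sub, Matrix.mul_sub,
    mul_diagonal_mul_transpose_mul_mul_diagonal_mul_transpose hU]
  simp only [Matrix.smul_mul, Matrix.one_mul, Matrix.mul_one]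
  rw [mul_diagonal_mul_transpose_sub_mul_diagonal_mul_transpose hce, sub_add_cancel]

theorem inv_smul_one_add_mul_diagonal_mul_transpose (hc : c ≠ 0) :
    (c • 1 + U * diagonal e * Uᵀ)⁻¹ =
      c⁻¹ • (1 - U * diagonal (fun i => e i / (c + e i)) * Uᵀ) :=
  inv_eq_right_inv <| by
    rw [Matrix.mul_smul, smul_one_add_mul_diagonal_mul_transpose_mul_one_sub hce hU, smul_smul,
      inv_mul_cancel₀ hc, one_smul]

theorem one_sub_mul_diagonal_mul_transpose_mul_smul_add (S : Matrix m m K) :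
    (1 - U * diagonal (fun i => e i / (c + e i)) * Uᵀ) * (c • S + U * diagonal e * Uᵀ) =
      c • (S + U * diagonal (fun i => e i / (c + e i)) * Uᵀ * (1 - S)) := by
  rw [Matrix.sub_mul, Matrix.mul_add, Matrix.mul_add,
    mul_diagonal_mul_transpose_mul_mul_diagonal_mul_transpose hU, mul_comm _ e]
  simp only [Matrix.one_mul, Matrix.mul_smul, Matrix.mul_sub, Matrix.mul_one, smul_add, smul_sub]
  rw [← mul_diagonal_mul_transpose_sub_mul_diagonal_mul_transpose hce]
  abel

theorem trace_inv_smul_one_add_mul_smul_add (hc : c ≠ 0) (S : Matrix m m K) :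
    ((c • 1 + U * diagonal e * Uᵀ)⁻¹ * (c • S + U * diagonal e * Uᵀ)).trace =
      S.trace + (diagonal (fun i => e i / (c + e i)) * (1 - Uᵀ * S * U)).trace := by
  rw [inv_smul_one_add_mul_diagonal_mul_transpose hce hU hc, Matrix.smul_mul,
    one_sub_mul_diagonal_mul_transpose_mul_smul_add hce hU, smul_smul, inv_mul_cancel₀ hc,
    one_smul, trace_add, Matrix.mul_assoc U, Matrix.mul_assoc U, trace_mul_comm U]
  simp only [Matrix.mul_assoc, Matrix.sub_mul, Matrix.mul_sub, Matrix.one_mul, hU]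

end LowRank

section L2OpNorm

variable {𝕜 : Type*} [RCLike 𝕜]

theorem norm_apply_le_l2_opNorm [DecidableEq n] (A : Matrix m n 𝕜) (i : m) (j : n) :
    ‖A i j‖ ≤ ‖A‖ := by
  set x : EuclideanSpace 𝕜 n := EuclideanSpace.single j 1
  calc ‖A i j‖ = ‖(EuclideanSpace.equiv m 𝕜).symm (A *ᵥ x) i‖ := by simp [x]
    _ ≤ ‖(EuclideanSpace.equiv m 𝕜).symm (A *ᵥ x)‖ := PiLp.norm_apply_le _ i
    _ ≤ ‖A‖ * ‖x‖ := A.l2_opNorm_mulVec x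
    _ = ‖A‖ := by simp [x]

theorem l2_opNorm_one_le [DecidableEq n] : ‖(1 : Matrix n n 𝕜)‖ ≤ 1 := by
  rw [← diagonal_one, l2_opNorm_diagonal]
  exact pi_norm_le_iff_of_nonneg zero_le_one |>.mpr fun _ => norm_one.le

theorem l2_opNorm_le_one_of_conjTranspose_mul_self_eq_one [DecidableEq n] {U : Matrix m n 𝕜}
    (hU : Uᴴ * U = 1) : ‖U‖ ≤ 1 := by
  have hsq : ‖U‖ * ‖U‖ ≤ 1 := by
    rw [← l2_opNorm_conjTranspose_mul_self, hU]
    exact l2_opNorm_one_le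
  nlinarith [norm_nonneg U]

theorem l2_opNorm_conjTranspose_mul_mul_le [DecidableEq m] [DecidableEq n] {U : Matrix m n 𝕜}
    (hU : Uᴴ * U = 1) (S : Matrix m m 𝕜) : ‖Uᴴ * S * U‖ ≤ ‖S‖ := by
  have hUn := l2_opNorm_le_one_of_conjTranspose_mul_self_eq_one hU
  calc ‖Uᴴ * S * U‖ ≤ ‖U‖ * ‖S‖ * ‖U‖ := by
        grw [l2_opNorm_mul, l2_opNorm_mul, l2_opNorm_conjTranspose]
    _ ≤ 1 * ‖S‖ * 1 := by gcongr
    _ = ‖S‖ := by ring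

theorem norm_trace_diagonal_mul_le [DecidableEq n] {g : n → 𝕜} (hg : ∀ i, ‖g i‖ ≤ 1)
    (Y : Matrix n n 𝕜) : ‖(diagonal g * Y).trace‖ ≤ Fintype.card n * ‖Y‖ := by
  calc ‖(diagonal g * Y).trace‖ = ‖∑ i, g i * Y i i‖ := by simp [trace, diagonal_mul]
    _ ≤ ∑ i, ‖g i‖ * ‖Y i i‖ := by
        simpa only [norm_mul] using norm_sum_le Finset.univ fun i => g i * Y i i
    _ ≤ ∑ _i : n, 1 * ‖Y‖ := by
        gcongr with i
        · exact hg i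
        · exact norm_apply_le_l2_opNorm Y i i
    _ = Fintype.card n * ‖Y‖ := by simp

end L2OpNorm

end Matrix

theorem trace_invsqrt_sandwich_close_to_trace_general
    (p M : ℕ)
    (U : Matrix (Fin p) (Fin M) ℝ) (hU : Uᵀ * U = 1)
    (d : Fin M → ℝ) (hd : ∀ i, 0 ≤ d i) (c a : ℝ) (hc : 0 < c) (ha : 0 ≤ a)
    (Sbar : Matrix (Fin p) (Fin p) ℝ)
    (P : Matrix (Fin p) (Fin p) ℝ)
    (hP : P = c • (1 : Matrix (Fin p) (Fin p) ℝ) + a • (U * diagonal d * Uᵀ)) :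
    |(matInvSqrt P * (c • Sbar + a • (U * diagonal d * Uᵀ)) * matInvSqrt P).trace -
        Sbar.trace| ≤ 2 * (M : ℝ) * ‖Sbar‖ + (M : ℝ) := by
  have hU' : Uᴴ * U = 1 := by rwa [conjTranspose_eq_transpose_of_trivial]
  have hlow : a • (U * diagonal d * Uᵀ) = U * diagonal (a • d) * Uᵀ := by
    rw [diagonal_smul, Matrix.mul_smul, Matrix.smul_mul]
  have hPsd : P.PosSemidef := by
    have hUDU := (posSemidef_diagonal_iff.mpr hd).mul_mul_conjTranspose_same U
    rw [conjTranspose_eq_transpose_of_trivial] at hUDU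
    rw [hP]
    exact (PosSemidef.one.smul hc.le).add (hUDU.smul ha)
  have had : ∀ i, 0 ≤ (a • d) i := fun i => mul_nonneg ha (hd i)
  have hce : ∀ i, 0 < c + (a • d) i := fun i => add_pos_of_pos_of_nonneg hc (had i)
  have hweight : ∀ i, ‖(a • d) i / (c + (a • d) i)‖ ≤ 1 := fun i => by
    rw [Real.norm_eq_abs, abs_div, abs_of_nonneg (had i), abs_of_pos (hce i), div_le_one (hce i)]
    linarith
  rw [trace_matInvSqrt_mul_mul_matInvSqrt hPsd, hP, hlow,
    trace_inv_smul_one_add_mul_smul_add (fun i => (hce i).ne') hU hc.ne', add_sub_cancel_left,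
    ← Real.norm_eq_abs]
  calc _ ≤ M * ‖1 - Uᵀ * Sbar * U‖ := by
        simpa using norm_trace_diagonal_mul_le hweight (1 - Uᵀ * Sbar * U)
    _ ≤ M * (1 + ‖Sbar‖) := by
        gcongr
        refine (norm_sub_le _ _).trans (add_le_add l2_opNorm_one_le ?_)
        simpa [conjTranspose_eq_transpose_of_trivial] using
          l2_opNorm_conjTranspose_mul_mul_le hU' Sbar
    _ ≤ 2 * M * ‖Sbar‖ + M := by linarith [mul_nonneg M.cast_nonneg (norm_nonneg Sbar)]

/-- For `U` a `p×M` matrix with orthonormal columns, `Λ = diagonal d` with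
`d ≥ 0`, `c > 0`, `a ≥ 0`, `Σ̄` symmetric positive semidefinite and
`P = c·I_p + a·U Λ Uᵀ`, one has
`|tr(P^{−1/2}·(c·Σ̄ + a·U Λ Uᵀ)·P^{−1/2}) − tr(Σ̄)| ≤ 2·M·‖Σ̄‖ + M`. -/
theorem trace_invsqrt_sandwich_close_to_trace
    (p M : ℕ) (hM : 1 ≤ M) (hMp : M ≤ p)
    (U : Matrix (Fin p) (Fin M) ℝ) (hU : Uᵀ * U = 1)
    (d : Fin M → ℝ) (hd : ∀ i, 0 ≤ d i) (c a : ℝ) (hc : 0 < c) (ha : 0 ≤ a)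
    (Sbar : Matrix (Fin p) (Fin p) ℝ) (hSbar : Sbar.PosSemidef)
    (P : Matrix (Fin p) (Fin p) ℝ)
    (hP : P = c • (1 : Matrix (Fin p) (Fin p) ℝ) + a • (U * diagonal d * Uᵀ)) :
    |(matInvSqrt P * (c • Sbar + a • (U * diagonal d * Uᵀ)) * matInvSqrt P).trace -
        Sbar.trace| ≤ 2 * (M : ℝ) * ‖Sbar‖ + (M : ℝ) :=
  trace_invsqrt_sandwich_close_to_trace_general p M U hU d hd c a hc ha Sbar P hP
end

section
/- Let A and B be p×p Hermitian complex matrices, let z ∈ ℂ with Im(z) = v > 0, and let G be a p×p complex matrix with ‖G‖ ≤ c. Then |tr((A − z·I)^{−1}·G) − tr((B − z·I)^{−1}·G)| ≤ (c/v²)·tr((((A − B)*)·(A − B))^{1/2}), where the right-hand trace equals the sum of the singular values of A − B. -/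
/-!
The resolvent identity `R_A - R_B = R_A (B - A) R_B` and cyclicity of the trace turn the
difference of traces into `-tr(X (A - B))` with `X = R_B G R_A`, and `‖X‖ ≤ c / v²` because
`‖(A - z)⁻¹‖ ≤ 1 / Im z` for Hermitian `A`. Diagonalising the Hermitian matrix `D = A - B` by a
unitary gives `|tr(X D)| ≤ ‖X‖ ∑ |λᵢ(D)|`, and `∑ |λᵢ(D)| = tr |D| = tr (D* D)^{1/2}`.
-/

open Matrix
open scoped Matrix.Norms.L2Operator ComplexOrder

/-- The square root of a positive semidefinite matrix, as `Matrix.PosSemidef.sqrt` was defined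
in the older Mathlib (since removed in favour of `CFC.sqrt`). -/
noncomputable def Matrix.PosSemidef.sqrt {n : Type*} [Fintype n] [DecidableEq n] {𝕜 : Type*}
    [RCLike 𝕜] {A : Matrix n n 𝕜} (hA : A.PosSemidef) : Matrix n n 𝕜 :=
  hA.1.eigenvectorUnitary.1 * diagonal ((↑) ∘ (√·) ∘ hA.1.eigenvalues) *
    (star hA.1.eigenvectorUnitary : Matrix n n 𝕜)

open Unitary

theorem Unitary.norm_conjStarAlgAut_apply {S E : Type*} [NormedRing E] [StarRing E] [CStarRing E]
    [SMul S E] [IsScalarTower S E E] [SMulCommClass S E E] (u : unitary E) (x : E) :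
    ‖conjStarAlgAut S E u x‖ = ‖x‖ := by
  rw [conjStarAlgAut_apply, mul_assoc, CStarRing.norm_coe_unitary_mul,
    CStarRing.norm_mul_mem_unitary _ (Unitary.star_mem u.2)]

theorem Complex.ofReal_sub_ne_zero_of_im_ne_zero {z : ℂ} (hz : z.im ≠ 0) (r : ℝ) :
    (r : ℂ) - z ≠ 0 := fun h =>
  hz (by simpa using congrArg Complex.im h)

namespace Matrix

variable {m n 𝕜 : Type*} [Fintype m] [Fintype n] [RCLike 𝕜]

theorem norm_entry_le_l2_opNorm [DecidableEq n] (M : Matrix m n 𝕜) (i : m) (j : n) :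
    ‖M i j‖ ≤ ‖M‖ := by
  have h := M.l2_opNorm_mulVec (PiLp.single 2 j 1)
  rw [PiLp.norm_single, norm_one, mul_one] at h
  refine le_trans (le_of_eq ?_) ((PiLp.norm_apply_le _ i).trans h)
  simp

theorem trace_mul_conjStarAlgAut [DecidableEq n] (X D : Matrix n n 𝕜) (U : unitaryGroup n 𝕜) :
    (X * conjStarAlgAut 𝕜 _ U D).trace = ((conjStarAlgAut 𝕜 _ U).symm X * D).trace := by
  rw [conjStarAlgAut_apply, conjStarAlgAut_symm_apply, ← mul_assoc, ← mul_assoc, trace_mul_cycle]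
  simp only [mul_assoc]

theorem trace_inv_mul_sub_trace_inv_mul {α : Type*} [CommRing α] [DecidableEq n]
    {P Q : Matrix n n α} (hP : IsUnit P) (hQ : IsUnit Q) (G : Matrix n n α) :
    (P⁻¹ * G).trace - (Q⁻¹ * G).trace = (Q⁻¹ * G * P⁻¹ * (Q - P)).trace := by
  rw [← trace_sub, ← sub_mul, inv_sub_inv (iff_of_true hP hQ), mul_assoc _ Q⁻¹,
    trace_mul_comm]
  simp only [mul_assoc]

open scoped MatrixOrder in
theorem PosSemidef.sqrt_eq_cfc_sqrt [DecidableEq n] {M : Matrix n n 𝕜} (hM : M.PosSemidef) :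
    hM.sqrt = CFC.sqrt M := by
  rw [CFC.sqrt_eq_real_sqrt M hM.nonneg, cfcₙ_eq_cfc, hM.1.cfc_eq]
  rfl

namespace IsHermitian

section RCLike

variable [DecidableEq n] {D : Matrix n n 𝕜} (hD : D.IsHermitian)
include hD

theorem trace_cfc (f : ℝ → ℝ) : (cfc f D).trace = ∑ i, (f (hD.eigenvalues i) : 𝕜) := by
  rw [hD.cfc_eq, IsHermitian.cfc, ← one_mul (conjStarAlgAut _ _ _ _), trace_mul_conjStarAlgAut]
  simp [trace_diagonal]

open scoped MatrixOrder in
theorem re_trace_sqrt_conjTranspose_mul_self :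
    RCLike.re (posSemidef_conjTranspose_mul_self D).sqrt.trace = ∑ i, |hD.eigenvalues i| := by
  rw [PosSemidef.sqrt_eq_cfc_sqrt, ← star_eq_conjTranspose, ← CFC.abs,
    CFC.abs_eq_cfc_norm D hD.isSelfAdjoint, hD.trace_cfc, map_sum]
  simp

theorem norm_trace_mul_le (X : Matrix n n 𝕜) :
    ‖(X * D).trace‖ ≤ ‖X‖ * ∑ i, |hD.eigenvalues i| := by
  set Y := (conjStarAlgAut 𝕜 _ hD.eigenvectorUnitary).symm X
  have hY : ‖Y‖ = ‖X‖ := by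
    rw [← Unitary.norm_conjStarAlgAut_apply (S := 𝕜) hD.eigenvectorUnitary Y,
      StarAlgEquiv.apply_symm_apply]
  calc ‖(X * D).trace‖ = ‖∑ i, Y i i * (hD.eigenvalues i : 𝕜)‖ := by
        conv_lhs => rw [hD.spectral_theorem, trace_mul_conjStarAlgAut]
        simp [trace, mul_diagonal, Y]
    _ ≤ ∑ i, ‖Y‖ * |hD.eigenvalues i| := by
        refine (norm_sum_le _ _).trans (Finset.sum_le_sum fun i _ => ?_)
        rw [norm_mul, RCLike.norm_ofReal]
        gcongr
        exact norm_entry_le_l2_opNorm Y i i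
    _ = ‖X‖ * ∑ i, |hD.eigenvalues i| := by rw [hY, Finset.mul_sum]

theorem sub_smul_one_eq_conjStarAlgAut (z : 𝕜) :
    D - z • 1 = conjStarAlgAut 𝕜 _ hD.eigenvectorUnitary
      (diagonal fun i => (hD.eigenvalues i : 𝕜) - z) := by
  rw [show (diagonal fun i => (hD.eigenvalues i : 𝕜) - z) =
      diagonal (RCLike.ofReal ∘ hD.eigenvalues) - z • 1 by
    rw [smul_one_eq_diagonal, diagonal_sub]; rfl]
  rw [map_sub, map_smul, map_one, ← hD.spectral_theorem]

end RCLike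

section Resolvent

variable [DecidableEq n] {A : Matrix n n ℂ} (hA : A.IsHermitian) {z : ℂ} (hz : z.im ≠ 0)
include hA hz

theorem isUnit_sub_smul_one : IsUnit (A - z • 1) := by
  rw [hA.sub_smul_one_eq_conjStarAlgAut]
  exact (isUnit_diagonal.mpr (Pi.isUnit_iff.mpr fun i =>
    (Complex.ofReal_sub_ne_zero_of_im_ne_zero hz _).isUnit)).map _

theorem inv_sub_smul_one_eq_conjStarAlgAut :
    (A - z • 1)⁻¹ = conjStarAlgAut ℂ _ hA.eigenvectorUnitary
      (diagonal fun i => ((hA.eigenvalues i : ℂ) - z)⁻¹) := by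
  refine inv_eq_right_inv ?_
  rw [hA.sub_smul_one_eq_conjStarAlgAut, ← map_mul, diagonal_mul_diagonal]
  simp [Complex.ofReal_sub_ne_zero_of_im_ne_zero hz]

theorem norm_inv_sub_smul_one_le : ‖(A - z • 1)⁻¹‖ ≤ |z.im|⁻¹ := by
  rw [hA.inv_sub_smul_one_eq_conjStarAlgAut hz, Unitary.norm_conjStarAlgAut_apply,
    l2_opNorm_diagonal]
  refine (pi_norm_le_iff_of_nonneg (by positivity)).mpr fun i => ?_
  rw [norm_inv]
  refine inv_anti₀ (abs_pos.mpr hz) ?_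
  simpa using Complex.abs_im_le_norm ((hA.eigenvalues i : ℂ) - z)

end Resolvent

end IsHermitian

end Matrix

/-- Resolvent perturbation bound for traces against a bounded matrix:
for Hermitian `A, B`, `z` with `Im z = v > 0`, and `‖G‖ ≤ c`,
`|tr((A − zI)⁻¹ G) − tr((B − zI)⁻¹ G)| ≤ (c/v²)·tr(((A − B)* (A − B))^{1/2})`,
the right-hand trace being the sum of the singular values of `A − B`. -/
theorem trace_resolvent_difference_bound
    (p : ℕ) (A B G : Matrix (Fin p) (Fin p) ℂ)
    (hA : A.IsHermitian) (hB : B.IsHermitian)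
    (z : ℂ) (v : ℝ) (hv : 0 < v) (hzv : z.im = v)
    (c : ℝ) (hG : ‖G‖ ≤ c) :
    ‖((A - z • 1)⁻¹ * G).trace - ((B - z • 1)⁻¹ * G).trace‖ ≤
      c / v ^ 2 * ((posSemidef_conjTranspose_mul_self (A - B)).sqrt.trace).re := by
  have hz : z.im ≠ 0 := hzv ▸ hv.ne'
  have hv' : |z.im|⁻¹ = v⁻¹ := by rw [hzv, abs_of_pos hv]
  have hc : 0 ≤ c := (norm_nonneg G).trans hG
  set RA := (A - z • 1)⁻¹
  set RB := (B - z • 1)⁻¹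
  have hRA : ‖RA‖ ≤ v⁻¹ := hv' ▸ hA.norm_inv_sub_smul_one_le hz
  have hRB : ‖RB‖ ≤ v⁻¹ := hv' ▸ hB.norm_inv_sub_smul_one_le hz
  have hnorm : ‖RB * G * RA‖ ≤ c / v ^ 2 :=
    calc ‖RB * G * RA‖ ≤ ‖RB‖ * ‖G‖ * ‖RA‖ :=
          (l2_opNorm_mul _ _).trans (by gcongr; exact l2_opNorm_mul _ _)
      _ ≤ v⁻¹ * c * v⁻¹ := by gcongr
      _ = c / v ^ 2 := by ring
  have hdiff : (RA * G).trace - (RB * G).trace = -(RB * G * RA * (A - B)).trace := by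
    rw [trace_inv_mul_sub_trace_inv_mul (hA.isUnit_sub_smul_one hz) (hB.isUnit_sub_smul_one hz),
      sub_sub_sub_cancel_right, ← neg_sub A B, mul_neg, trace_neg]
  rw [hdiff, norm_neg, ← RCLike.re_to_complex, (hA.sub hB).re_trace_sqrt_conjTranspose_mul_self]
  exact ((hA.sub hB).norm_trace_mul_le _).trans (by gcongr)
end
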